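/- Let v_in, v_out ∈ ℝ³ satisfy |v_in| < 1, |v_out| < 1, and v_in ≠ v_out. Define F(p) = v_out/(|p| − p·v_out) − v_in/(|p| − p·v_in) for p ≠ 0. Then the transverse part of F fails to be square integrable at low momentum: ∫_{0 < |p| ≤ 1} |P(p)F(p)|² dp/(2|p|) = ∞. -/

import Mathlib

open MeasureTheory Complex Pointwise

noncomputable section

abbrev E3 := EuclideanSpace ℝ (Fin 3)

/-- The transverse projection `P(p)v = v − (p·v/|p|²) p` on `ℝ³`. -/
def transProjR (p v : E3) : E3 := v - ((inner ℝ p v : ℝ) / ‖p‖^2) • p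

lemma transProjR_smul (t s : ℝ) (ht : t ≠ 0) (p w : E3) :
    transProjR (t • p) (s • w) = s • transProjR p w := by
  rcases eq_or_ne p 0 with rfl | hp
  · simp [transProjR]
  have hpn : (‖p‖ : ℝ) ≠ 0 := norm_ne_zero_iff.mpr hp
  simp only [transProjR, real_inner_smul_left, real_inner_smul_right, norm_smul,
    smul_sub, smul_smul, mul_pow, Real.norm_eq_abs, _root_.sq_abs]
  congr 2
  field_simp

set_option maxHeartbeats 2000000 in
/-- for `|v_in| < 1`, `|v_out| < 1`, `v_in ≠ v_out`, the transverse part of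
`F(p) = v_out/(|p| − p·v_out) − v_in/(|p| − p·v_in)` is not square integrable over
`0 < |p| ≤ 1` for the measure `dp/(2|p|)` (infrared divergence). -/
theorem asymptotic_term_not_sq_integrable_IR
    (vin vout : E3) (hvin : ‖vin‖ < 1) (hvout : ‖vout‖ < 1) (hne : vin ≠ vout)
    (F : E3 → E3)
    (hF : ∀ p : E3, F p = (‖p‖ - (inner ℝ p vout : ℝ))⁻¹ • vout
                        - (‖p‖ - (inner ℝ p vin : ℝ))⁻¹ • vin) :
    ∫⁻ p : E3 in {p : E3 | 0 < ‖p‖ ∧ ‖p‖ ≤ 1},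
        ENNReal.ofReal (‖transProjR p (F p)‖^2 / (2 * ‖p‖)) = ⊤ := by
  classical
  set G : E3 → E3 := fun p => transProjR p (F p) with hG
  -- find unit u orthogonal to vin and vout
  set K : Submodule ℝ E3 := Submodule.span ℝ {vin, vout} with hK
  have hKne : K ≠ ⊤ := by
    intro h
    have h1 : Module.finrank ℝ K ≤ 2 := by
      have := finrank_span_le_card (R := ℝ) ({vin, vout} : Set E3)
      refine this.trans ?_
      have : ({vin, vout} : Set E3).toFinset ⊆ {vin, vout} := by
        intro x hx; simpa using Set.mem_toFinset.mp hx
      calc ({vin, vout} : Set E3).toFinset.card ≤ ({vin, vout} : Finset E3).card :=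
            Finset.card_le_card this
        _ ≤ 2 := Finset.card_insert_le _ _ |>.trans (by simp)
    rw [h] at h1
    have : Module.finrank ℝ E3 = 3 := finrank_euclideanSpace_fin
    rw [finrank_top] at h1
    omega
  have hKorth : Kᗮ ≠ ⊥ := fun h => hKne (Submodule.orthogonal_eq_bot_iff.mp h)
  obtain ⟨u0, hu0, hu0ne⟩ := Submodule.exists_mem_ne_zero_of_ne_bot hKorth
  set u : E3 := ‖u0‖⁻¹ • u0 with hu
  have hu0n : (‖u0‖ : ℝ) ≠ 0 := norm_ne_zero_iff.mpr hu0ne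
  have hunorm : ‖u‖ = 1 := by
    rw [hu, norm_smul, Real.norm_eq_abs, abs_inv, _root_.abs_of_nonneg (norm_nonneg _),
      inv_mul_cancel₀ hu0n]
  have huK : u ∈ Kᗮ := Submodule.smul_mem _ _ hu0
  have hin : (inner ℝ u vin : ℝ) = 0 := by
    have := (Submodule.mem_orthogonal K u).mp huK vin
      (Submodule.subset_span (by simp))
    rw [real_inner_comm]; exact this
  have hout : (inner ℝ u vout : ℝ) = 0 := by
    have := (Submodule.mem_orthogonal K u).mp huK vout
      (Submodule.subset_span (by simp))
    rw [real_inner_comm]; exact this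
  -- value at u
  have hFu : F u = vout - vin := by
    rw [hF, hunorm, hin, hout]; norm_num
  have hGu : G u = vout - vin := by
    rw [hG]
    simp only [transProjR, hFu, hunorm, inner_sub_right, hin, hout]
    norm_num
  have hc0 : (0:ℝ) < ‖vout - vin‖ := by
    rw [norm_pos_iff, sub_ne_zero]; exact fun h => hne h.symm
  set c : ℝ := ‖vout - vin‖ / 2 with hcdef
  have hc : 0 < c := by positivity
  -- continuity of G at u
  have cinner : ∀ v : E3, Continuous fun p : E3 => (inner ℝ p v : ℝ) :=
    fun v => continuous_id.inner continuous_const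
  have hdot : (inner ℝ u vout : ℝ) = 0 := hout
  have c1 : ContinuousAt (fun p : E3 => (‖p‖ - (inner ℝ p vout : ℝ))⁻¹) u :=
    ((continuous_norm.sub (cinner vout)).continuousAt).inv₀ (by show ‖u‖ - inner ℝ u vout ≠ 0; rw [hunorm, hout]; norm_num)
  have c2 : ContinuousAt (fun p : E3 => (‖p‖ - (inner ℝ p vin : ℝ))⁻¹) u :=
    ((continuous_norm.sub (cinner vin)).continuousAt).inv₀ (by show ‖u‖ - inner ℝ u vin ≠ 0; rw [hunorm, hin]; norm_num)
  have cF : ContinuousAt F u := by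
    have : ContinuousAt (fun p : E3 => (‖p‖ - (inner ℝ p vout : ℝ))⁻¹ • vout
        - (‖p‖ - (inner ℝ p vin : ℝ))⁻¹ • vin) u :=
      (c1.smul continuousAt_const).sub (c2.smul continuousAt_const)
    exact this.congr (Filter.Eventually.of_forall fun p => (hF p).symm)
  have cG : ContinuousAt G u := by
    have h1 : ContinuousAt (fun p : E3 => (inner ℝ p (F p) : ℝ)) u :=
      continuousAt_id.inner cF
    have h2 : ContinuousAt (fun p : E3 => ‖p‖^2) u := (continuous_norm.pow 2).continuousAt
    have h3 : ContinuousAt (fun p : E3 => (inner ℝ p (F p) : ℝ) / ‖p‖^2) u :=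
      h1.div h2 (by rw [hunorm]; norm_num)
    exact cF.sub (h3.smul continuousAt_id)
  -- get a ball where ‖G‖ > c
  have hev : ∀ᶠ p in nhds u, c < ‖G p‖ := by
    have : c < ‖G u‖ := by rw [hGu, hcdef]; linarith
    exact cG.norm.eventually (eventually_gt_nhds this)
  obtain ⟨δ, hδpos, hδ⟩ := Metric.eventually_nhds_iff.mp hev
  set δ' : ℝ := min δ (1/2) with hδ'def
  have hδ'pos : 0 < δ' := lt_min hδpos (by norm_num)
  set V : Set E3 := Metric.ball u δ' with hV
  have hVnorm : ∀ q ∈ V, 1/2 < ‖q‖ ∧ ‖q‖ < 3/2 := by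
    intro q hq
    have hd : dist q u < 1/2 := lt_of_lt_of_le hq (min_le_right _ _)
    have h1 : |‖q‖ - ‖u‖| ≤ dist q u := abs_norm_sub_norm_le _ _
    rw [hunorm] at h1
    have h2 := abs_lt.mp (lt_of_le_of_lt h1 hd)
    exact ⟨by linarith [h2.1], by linarith [h2.2]⟩
  have hVG : ∀ q ∈ V, c < ‖G q‖ := by
    intro q hq
    exact hδ (lt_of_lt_of_le hq (min_le_left _ _))
  have hVopen : IsOpen V := Metric.isOpen_ball
  have hVmeas : MeasurableSet V := hVopen.measurableSet
  have hVpos : (0:ENNReal) < volume V := Metric.measure_ball_pos _ _ hδ'pos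
  -- homogeneity
  have hGhom : ∀ (t : ℝ), 0 < t → ∀ q : E3, q ≠ 0 → G (t • q) = t⁻¹ • G q := by
    intro t ht q hq
    have hden : ∀ v : E3, ‖t • q‖ - (inner ℝ (t • q) v : ℝ) = t * (‖q‖ - (inner ℝ q v : ℝ)) := by
      intro v
      rw [norm_smul, real_inner_smul_left, Real.norm_eq_abs, abs_of_pos ht]; ring
    have hFt : F (t • q) = t⁻¹ • F q := by
      rw [hF (t • q), hF q, hden, hden, mul_inv, mul_inv, smul_sub, smul_smul, smul_smul]
    rw [hG]
    simp only
    rw [hFt, transProjR_smul _ _ (ne_of_gt ht)]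
  -- the annular pieces
  set τ : ℕ → ℝ := fun n => (1/4 : ℝ)^(n+1) with hτ
  have hτpos : ∀ n, 0 < τ n := fun n => by positivity
  set S : ℕ → Set E3 := fun n => (τ n) • V with hS
  have hSnorm : ∀ n, ∀ p ∈ S n, τ n / 2 < ‖p‖ ∧ ‖p‖ < 3/2 * τ n := by
    intro n p hp
    obtain ⟨q, hq, rfl⟩ := hp
    have := hVnorm q hq
    rw [norm_smul, Real.norm_eq_abs, abs_of_pos (hτpos n)]
    constructor
    · nlinarith [hτpos n, this.1]
    · nlinarith [hτpos n, this.2]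
  have hSsub : ∀ n, S n ⊆ {p : E3 | 0 < ‖p‖ ∧ ‖p‖ ≤ 1} := by
    intro n p hp
    have h := hSnorm n p hp
    have hτle : τ n ≤ 1/4 := by
      rw [hτ]
      calc ((1:ℝ)/4)^(n+1) ≤ (1/4)^1 := by
            exact Bound.pow_le_pow_right_of_le_one_or_one_le (Or.inr ⟨by norm_num, by norm_num, by omega⟩)
        _ = 1/4 := pow_one _
    constructor
    · exact lt_trans (by positivity) h.1
    · nlinarith [h.2]
  have hSmeas : ∀ n, MeasurableSet (S n) := by
    intro n
    rw [hS]
    exact ((hVopen.smul₀ (ne_of_gt (hτpos n))).measurableSet)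
  have hSdisj : Pairwise (Function.onFun Disjoint S) := by
    have key : ∀ m n, m < n → Disjoint (S m) (S n) := by
      intro m n hmn
      rw [Set.disjoint_left]
      intro p hpm hpn
      have h1 := (hSnorm m p hpm).1
      have h2 := (hSnorm n p hpn).2
      have hτle : τ n ≤ τ m / 4 := by
        rw [hτ]
        calc ((1:ℝ)/4)^(n+1) ≤ (1/4)^(m+2) := by
              exact Bound.pow_le_pow_right_of_le_one_or_one_le (Or.inr ⟨by norm_num, by norm_num, by omega⟩)
          _ = (1/4)^(m+1) / 4 := by rw [pow_succ]; ring
      nlinarith [hτpos m]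
    intro m n hmn
    rcases hmn.lt_or_gt with h | h
    · exact key m n h
    · exact (key n m h).symm
  -- pointwise lower bound on S n
  have hbound : ∀ n, ∀ p ∈ S n,
      ENNReal.ofReal (c^2 / (3 * τ n ^3)) ≤ ENNReal.ofReal (‖G p‖^2 / (2 * ‖p‖)) := by
    intro n p hp
    obtain ⟨q, hq, rfl⟩ := hp
    have hqn := hVnorm q hq
    have hq0 : q ≠ 0 := by
      intro h; rw [h, norm_zero] at hqn; linarith [hqn.1]
    have ht := hτpos n
    rw [hGhom (τ n) ht q hq0]
    have hGq := hVG q hq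
    have hnp : ‖(τ n) • q‖ = τ n * ‖q‖ := by
      rw [norm_smul, Real.norm_eq_abs, abs_of_pos ht]
    have hGn : ‖(τ n)⁻¹ • G q‖ = (τ n)⁻¹ * ‖G q‖ := by
      rw [norm_smul, Real.norm_eq_abs, abs_of_pos (by positivity)]
    apply ENNReal.ofReal_le_ofReal
    rw [hnp, hGn]
    have h2 : ‖q‖ < 3/2 := hqn.2
    have h1 : 0 < ‖q‖ := by linarith [hqn.1]
    rw [div_le_div_iff₀ (by positivity) (by positivity)]
    have hcG : c ≤ ‖G q‖ := hGq.le
    have e1 : ((τ n)⁻¹ * ‖G q‖)^2 = (τ n)⁻¹^2 * ‖G q‖^2 := by ring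
    have e2 : c^2 ≤ ‖G q‖^2 := by nlinarith
    have hti : (τ n)⁻¹^2 * (τ n)^2 = 1 := by
      field_simp
    -- goal : c ^ 2 * (2 * (τ n * ‖q‖)) ≤ (τ n⁻¹ * ‖G q‖) ^ 2 * (3 * τ n ^ 3)
    rw [e1]
    have : (τ n)⁻¹^2 * ‖G q‖^2 * (3 * τ n ^3) = 3 * τ n * ‖G q‖^2 := by
      field_simp
    rw [this]
    have s1 : c^2 * (2*(τ n * ‖q‖)) ≤ c^2 * (3 * τ n) := by nlinarith [mul_nonneg (mul_nonneg (sq_nonneg c) ht.le) (by linarith : (0:ℝ) ≤ 3 - 2*‖q‖)]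
    have s2 : c^2 * (3 * τ n) ≤ 3 * τ n * ‖G q‖^2 := by
      have := mul_le_mul_of_nonneg_left e2 (by positivity : (0:ℝ) ≤ 3 * τ n)
      linarith
    linarith
  -- measure of S n
  have hSvol : ∀ n, volume (S n) = ENNReal.ofReal (τ n ^ 3) * volume V := by
    intro n
    rw [hS]
    show volume ((τ n) • V) = _
    rw [Measure.addHaar_smul]
    congr 2
    rw [finrank_euclideanSpace_fin, abs_of_pos (by positivity)]
  -- each piece contributes at least C
  set C : ENNReal := ENNReal.ofReal (c^2/3) * volume V with hCdef
  have hCle : ∀ n, C ≤ ∫⁻ p in S n, ENNReal.ofReal (‖G p‖^2 / (2 * ‖p‖)) := by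
    intro n
    calc C = ENNReal.ofReal (c^2 / (3 * τ n ^3)) * volume (S n) := by
          rw [hSvol n, hCdef, ← mul_assoc]
          congr 1
          rw [← ENNReal.ofReal_mul (by positivity)]
          congr 1
          have ht := hτpos n
          field_simp
      _ = ∫⁻ _ in S n, ENNReal.ofReal (c^2 / (3 * τ n ^3)) := by
          rw [setLIntegral_const]
      _ ≤ ∫⁻ p in S n, ENNReal.ofReal (‖G p‖^2 / (2 * ‖p‖)) :=
          setLIntegral_mono' (hSmeas n) (hbound n)
  have hCne : C ≠ 0 := by
    rw [hCdef]
    exact mul_ne_zero (by simp [ENNReal.ofReal_eq_zero]; positivity) (ne_of_gt hVpos)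
  -- conclude
  rw [← top_le_iff]
  calc (⊤ : ENNReal) = ∑' _ : ℕ, C := (ENNReal.tsum_const_eq_top_of_ne_zero hCne).symm
    _ ≤ ∑' n, ∫⁻ p in S n, ENNReal.ofReal (‖G p‖^2 / (2 * ‖p‖)) :=
        ENNReal.tsum_le_tsum hCle
    _ = ∫⁻ p in ⋃ n, S n, ENNReal.ofReal (‖G p‖^2 / (2 * ‖p‖)) :=
        (lintegral_iUnion hSmeas hSdisj _).symm
    _ ≤ ∫⁻ p in {p : E3 | 0 < ‖p‖ ∧ ‖p‖ ≤ 1}, ENNReal.ofReal (‖G p‖^2 / (2 * ‖p‖)) :=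
        lintegral_mono_set (Set.iUnion_subset hSsub)
    _ = _ := rfl
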